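/- arXiv:1610.08677 — 3 statements merged into one kernel-verified Lean document; each statement's English description precedes it below -/
import Mathlib

section
/- For finite sets A_1, ..., A_n that are pairwise disjoint and nonempty, with A = A_1 ∪ ... ∪ A_n of cardinality k, D = A_1 × ... × A_n, and for a subset I ⊆ A define p(I) = ∏_{i=1}^n |A_i ∩ I|. Let c(t) denote the number of subsets {e^1,...,e^t} ⊆ D of cardinality t such that the union of the coordinate-sets of the e^ℓ equals A (where the coordinate-set of e = (e_1,...,e_n) is {e_1,...,e_n}). Then c(t) = ∑_{i=0}^{k-n} (-1)^i ∑_{I ⊆ A, |I| = k - i} C(p(I), t), where C(·,·) denotes the binomial coefficient. -/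
/-!
Inclusion–exclusion over the set `I ⊆ A` of admissible coordinates: the `t`-subsets of `D` all of
whose coordinates lie in `I` are exactly the `t`-subsets of `∏ i, (A_i ∩ I)`, so there are
`C(p(I), t)` of them. Because the `A_i` are disjoint, some `A_i` misses `I` when `|I| < n`, so
`p(I) = 0` and only the terms with `|I| = k - i ≥ n` survive.
-/

open Finset Function

section

variable {α : Type*} [DecidableEq α]

lemma sum_filter_powerset_neg_one_pow_card_sdiff {U B : Finset α} (hU : U ⊆ B) :
    ∑ I ∈ B.powerset with U ⊆ I, (-1 : ℤ) ^ #(B \ I) = if U = B then 1 else 0 := by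
  have hcompl : ∑ I ∈ B.powerset with U ⊆ I, (-1 : ℤ) ^ #(B \ I)
      = ∑ J ∈ (B \ U).powerset, (-1 : ℤ) ^ #J := by
    refine sum_nbij' (B \ ·) (B \ ·) ?_ ?_ ?_ ?_ fun _ _ => rfl
    · intro I hI
      simp only [mem_filter, mem_powerset] at hI ⊢
      exact sdiff_subset_sdiff le_rfl hI.2
    · intro J hJ
      simp only [mem_filter, mem_powerset] at hJ ⊢
      exact ⟨sdiff_subset, subset_sdiff.2 ⟨hU, (disjoint_of_subset_left hJ sdiff_disjoint).symm⟩⟩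
    · intro I hI
      exact Finset.sdiff_sdiff_eq_self (mem_powerset.1 (mem_filter.1 hI).1)
    · intro J hJ
      exact Finset.sdiff_sdiff_eq_self ((mem_powerset.1 hJ).trans sdiff_subset)
  rw [hcompl, sum_powerset_neg_one_pow_card]
  exact if_congr (sdiff_eq_empty_iff_subset.trans ⟨subset_antisymm hU, Eq.superset⟩) rfl rfl

lemma filter_powersetCard_piFinset_biUnion_image_subset {ι : Type*} [Fintype ι] [DecidableEq ι]
    (A : ι → Finset α) (I : Finset α) (t : ℕ) :
    {S ∈ (Fintype.piFinset A).powersetCard t | S.biUnion (fun e => univ.image e) ⊆ I}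
      = (Fintype.piFinset fun j => A j ∩ I).powersetCard t := by
  have hcoord (S : Finset (ι → α)) :
      S.biUnion (fun e => univ.image e) ⊆ I ↔ ∀ e ∈ S, ∀ j, e j ∈ I := by
    simp [biUnion_subset_iff_forall_subset, image_subset_iff]
  ext S
  simp only [mem_filter, mem_powersetCard, hcoord, subset_iff, Fintype.mem_piFinset, mem_inter]
  aesop

lemma exists_inter_eq_empty_of_card_lt {ι : Type*} [Fintype ι] {A : ι → Finset α}
    (hA : Pairwise (Disjoint on A)) {I : Finset α} (hI : #I < Fintype.card ι) :
    ∃ j, A j ∩ I = ∅ := by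
  by_contra! h
  choose f hf using h
  have hinj : Set.InjOn f (univ : Finset ι) := fun i _ j _ hij => by
    by_contra hne
    exact disjoint_left.1 (hA hne) (mem_inter.1 (hf i)).1 (hij ▸ (mem_inter.1 (hf j)).1)
  exact hI.not_ge (by simpa using card_le_card_of_injOn f (fun j _ => (mem_inter.1 (hf j)).2) hinj)

lemma card_filter_eq_eq_sum_powerset_neg_one_pow_mul {β : Type*} (X : Finset β)
    (c : β → Finset α) {B : Finset α} (hc : ∀ x ∈ X, c x ⊆ B) :
    (#{x ∈ X | c x = B} : ℤ) = ∑ I ∈ B.powerset, (-1 : ℤ) ^ #(B \ I) * #{x ∈ X | c x ⊆ I} := by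
  simp only [card_filter, Nat.cast_sum, Nat.cast_ite, Nat.cast_one, Nat.cast_zero, mul_sum,
    mul_ite, mul_one, mul_zero]
  rw [sum_comm]
  refine sum_congr rfl fun x hx => ?_
  rw [← sum_filter, sum_filter_powerset_neg_one_pow_card_sdiff (hc x hx)]

lemma sum_powerset_neg_one_pow_mul_eq_sum_range {R : Type*} [CommRing R] (B : Finset α)
    (f : Finset α → R) (n : ℕ) (hf : ∀ I, #I < n → f I = 0) :
    ∑ I ∈ B.powerset, (-1) ^ #(B \ I) * f I
      = ∑ i ∈ range (#B - n + 1), (-1) ^ i * ∑ I ∈ B.powersetCard (#B - i), f I := by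
  calc ∑ I ∈ B.powerset, (-1) ^ #(B \ I) * f I
      = ∑ j ∈ range (#B + 1), (-1) ^ (#B - j) * ∑ I ∈ B.powersetCard j, f I := by
        rw [sum_powerset]
        refine sum_congr rfl fun j _ => ?_
        rw [mul_sum]
        refine sum_congr rfl fun I hI => ?_
        rw [card_sdiff_of_subset (mem_powersetCard.1 hI).1, (mem_powersetCard.1 hI).2]
    _ = ∑ i ∈ range (#B + 1), (-1) ^ i * ∑ I ∈ B.powersetCard (#B - i), f I := by
        rw [← sum_range_reflect]
        refine sum_congr rfl fun i hi => ?_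
        rw [mem_range] at hi
        rw [show #B + 1 - 1 - i = #B - i by omega, show #B - (#B - i) = i by omega]
    _ = _ := by
        refine (sum_subset (range_subset_range.2 (by omega)) fun i hi hi' => ?_).symm
        rw [mem_range] at hi hi'
        rw [sum_eq_zero fun I hI => hf I ?_, mul_zero]
        rw [(mem_powersetCard.1 hI).2]
        omega

end

theorem stmt_0_general {α : Type*} [DecidableEq α] (n k t : ℕ) (ht : 0 < t)
    (A : Fin n → Finset α)
    (hdisj : ∀ i j, i ≠ j → Disjoint (A i) (A j))
    (hk : (Finset.univ.biUnion A).card = k) :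
    (((((Fintype.piFinset A).powersetCard t)).filter
        (fun S => S.biUnion (fun e => Finset.image e Finset.univ)
          = Finset.univ.biUnion A)).card : ℤ)
      = ∑ i ∈ Finset.range (k - n + 1), (-1 : ℤ) ^ i *
          ∑ I ∈ (Finset.univ.biUnion A).powersetCard (k - i),
            ((∏ j, ((A j) ∩ I).card).choose t : ℤ) := by
  subst hk
  have hcover : ∀ S ∈ (Fintype.piFinset A).powersetCard t,
      S.biUnion (fun e => univ.image e) ⊆ univ.biUnion A := fun S hS =>
    biUnion_subset.2 fun e he => image_subset_iff.2 fun j _ =>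
      mem_biUnion.2 ⟨j, mem_univ j, Fintype.mem_piFinset.1 ((mem_powersetCard.1 hS).1 he) j⟩
  have hsmall (I : Finset α) (hI : #I < n) : ((∏ j, #(A j ∩ I)).choose t : ℤ) = 0 := by
    obtain ⟨j, hj⟩ := exists_inter_eq_empty_of_card_lt (fun i j h => hdisj i j h)
      (by simpa using hI)
    rw [prod_eq_zero (mem_univ j) (by rw [hj, card_empty]), Nat.choose_eq_zero_of_lt ht,
      Nat.cast_zero]
  rw [card_filter_eq_eq_sum_powerset_neg_one_pow_mul _ _ hcover,
    ← sum_powerset_neg_one_pow_mul_eq_sum_range _ _ n hsmall]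
  simp only [filter_powersetCard_piFinset_biUnion_image_subset, card_powersetCard,
    Fintype.card_piFinset]

theorem stmt_0 {α : Type*} [DecidableEq α] (n k t : ℕ) (hn : 0 < n) (ht : 0 < t)
    (A : Fin n → Finset α) (hne : ∀ i, (A i).Nonempty)
    (hdisj : ∀ i j, i ≠ j → Disjoint (A i) (A j))
    (hk : (Finset.univ.biUnion A).card = k) (hnk : n ≤ k) :
    (((((Fintype.piFinset A).powersetCard t)).filter
        (fun S => S.biUnion (fun e => Finset.image e Finset.univ)
          = Finset.univ.biUnion A)).card : ℤ)
      = ∑ i ∈ Finset.range (k - n + 1), (-1 : ℤ) ^ i *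
          ∑ I ∈ (Finset.univ.biUnion A).powersetCard (k - i),
            ((∏ j, ((A j) ∩ I).card).choose t : ℤ) :=
  stmt_0_general n k t ht A hdisj hk
end

section
/- For finite sets A_1, ..., A_n that are pairwise disjoint and nonempty with A = A_1 ∪ ... ∪ A_n of cardinality k and D = A_1 × ... × A_n, let c(t) be the number of subsets of D of cardinality t whose elements' coordinate-sets union to all of A. Then the alternating sum ∑_{t=1}^{|D|} (-1)^{t-1} c(t) equals (-1)^{k-n}. -/
/-!
Sorting the families `S ⊆ D` by size, the alternating sum equals `[A = ∅]` minus the signed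
count `∑ (-1)^|S|` over the covering families. Möbius inversion over the set `T ⊆ A` of points a
family avoids turns the signed count into `∑ (-1)^|T|` over the `T` that contain some block `A_i`:
the families avoiding `T` are the subsets of `∏ (A_i \ T)`, whose signed count vanishes unless
some `A_i ⊆ T`. The complementary sum, over the `T` containing no block, factors over the blocks as
`∏ (-1)^(|A_i| - 1) = (-1)^(k - n)`.
-/

open Finset Fintype Function

theorem sum_Icc_neg_one_pow_mul_card_filter_powersetCard {β : Type*} (s : Finset β)
    (p : Finset β → Prop) [DecidablePred p] :
    ∑ t ∈ Icc 1 #s, (-1 : ℤ) ^ (t - 1) * (#{S ∈ powersetCard t s | p S} : ℤ)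
      = (if p ∅ then 1 else 0) - ∑ S ∈ s.powerset with p S, (-1 : ℤ) ^ #S := by
  have hsize : ∀ t, ∑ S ∈ powersetCard t s with p S, (-1 : ℤ) ^ #S
      = (-1) ^ t * #{S ∈ powersetCard t s | p S} := by
    intro t
    rw [Finset.sum_congr rfl fun S hS => by rw [(mem_powersetCard.1 (mem_filter.1 hS).1).2]]
    simp [mul_comm]
  have hempty : ∑ S ∈ powersetCard 0 s with p S, (-1 : ℤ) ^ #S = if p ∅ then 1 else 0 := by
    rw [powersetCard_zero, sum_filter, sum_singleton, Finset.card_empty, pow_zero]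
  rw [sum_filter, sum_powerset, sum_range_succ', ← Ico_add_one_right_eq_Icc, sum_Ico_eq_sum_range]
  simp only [← sum_filter, hempty, hsize, add_tsub_cancel_right, pow_succ, add_comm 1]
  simp

theorem sum_powerset_filter_not_subset_neg_one_pow_card {α : Type*} [DecidableEq α]
    {s : Finset α} (hs : s.Nonempty) :
    ∑ C ∈ s.powerset with ¬ s ⊆ C, (-1 : ℤ) ^ #C = (-1) ^ (#s - 1) := by
  have hproper : {C ∈ s.powerset | ¬ s ⊆ C} = s.powerset.erase s := by
    ext C
    simp only [mem_filter, mem_erase, mem_powerset, ne_eq, subset_antisymm_iff]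
    tauto
  rw [hproper, ← add_right_inj ((-1 : ℤ) ^ #s),
    add_sum_erase _ (fun C => (-1 : ℤ) ^ #C) (mem_powerset_self s),
    sum_powerset_neg_one_pow_card_of_nonempty hs]
  obtain ⟨m, hm⟩ := Nat.exists_eq_add_one_of_ne_zero hs.card_pos.ne'
  rw [hm, Nat.add_sub_cancel, pow_succ]
  ring

section Blocks

variable {ι α : Type*} [Fintype ι] [DecidableEq α]

theorem biUnion_inter_eq_of_pairwise_disjoint {A : ι → Finset α}
    (hA : Pairwise (Disjoint on A)) {P : ι → Finset α} (hP : ∀ i, P i ⊆ A i) (i : ι) :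
    univ.biUnion P ∩ A i = P i := by
  ext a
  simp only [mem_inter, mem_biUnion, mem_univ, true_and]
  refine ⟨fun ⟨⟨j, haj⟩, hai⟩ => ?_, fun ha => ⟨⟨i, ha⟩, hP i ha⟩⟩
  obtain rfl | hji := eq_or_ne j i
  · exact haj
  · exact absurd hai (disjoint_left.1 (hA hji) (hP j haj))

theorem card_eq_sum_card_inter {A : ι → Finset α} (hA : Pairwise (Disjoint on A))
    {T : Finset α} (hT : T ⊆ univ.biUnion A) : #T = ∑ i, #(T ∩ A i) := by
  conv_lhs => rw [← inter_eq_left.2 hT, inter_biUnion]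
  exact card_biUnion fun i _ j _ hij => (hA hij).mono inter_subset_right inter_subset_right

theorem sum_powerset_biUnion_prod_inter [DecidableEq ι] {R : Type*} [CommSemiring R]
    {A : ι → Finset α} (hA : Pairwise (Disjoint on A)) (f : ι → Finset α → R) :
    ∑ T ∈ (univ.biUnion A).powerset, ∏ i, f i (T ∩ A i)
      = ∏ i, ∑ C ∈ (A i).powerset, f i C := by
  rw [prod_univ_sum]
  refine sum_nbij' (fun T i => T ∩ A i) (fun P => univ.biUnion P) ?_ ?_ ?_ ?_ fun _ _ => rfl
  · simp
  · simp only [mem_piFinset, mem_powerset]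
    exact fun P hP =>
      biUnion_subset.2 fun i _ => (hP i).trans (subset_biUnion_of_mem A (mem_univ i))
  · intro T hT
    rw [← inter_biUnion, inter_eq_left.2 (mem_powerset.1 hT)]
  · intro P hP
    simp only [mem_piFinset, mem_powerset] at hP
    exact funext (biUnion_inter_eq_of_pairwise_disjoint hA hP)

theorem sum_powerset_biUnion_filter_not_exists_subset [DecidableEq ι] {A : ι → Finset α}
    (hA : Pairwise (Disjoint on A)) (hne : ∀ i, (A i).Nonempty) :
    ∑ T ∈ (univ.biUnion A).powerset with ¬ ∃ i, A i ⊆ T, (-1 : ℤ) ^ #T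
      = (-1) ^ (#(univ.biUnion A) - Fintype.card ι) := by
  have hfactor : ∀ T ∈ (univ.biUnion A).powerset,
      (if ¬ ∃ i, A i ⊆ T then (-1 : ℤ) ^ #T else 0)
        = ∏ i, if ¬ A i ⊆ T ∩ A i then (-1 : ℤ) ^ #(T ∩ A i) else 0 := by
    intro T hT
    simp only [not_exists, Fintype.prod_ite_zero, subset_inter_iff, subset_refl, and_true,
      prod_pow_eq_pow_sum, ← card_eq_sum_card_inter hA (mem_powerset.1 hT)]
  rw [sum_filter, sum_congr rfl hfactor,
    sum_powerset_biUnion_prod_inter hA fun i C => if ¬ A i ⊆ C then (-1 : ℤ) ^ #C else 0]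
  simp only [← sum_filter, sum_powerset_filter_not_subset_neg_one_pow_card (hne _),
    prod_pow_eq_pow_sum]
  rw [sum_tsub_distrib _ fun i _ => (hne i).card_pos, card_biUnion fun i _ j _ hij => hA hij]
  simp

/-- `coordUnion S` is the paper's `⋃_{e ∈ S} s(e)`. -/
def coordUnion (S : Finset (ι → α)) : Finset α := S.biUnion fun e => univ.image e

theorem coordUnion_subset_biUnion [DecidableEq ι] {A : ι → Finset α} {S : Finset (ι → α)}
    (hS : S ⊆ piFinset A) : coordUnion S ⊆ univ.biUnion A := by
  simp only [coordUnion, biUnion_subset, image_subset_iff]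
  exact fun e he i _ => mem_biUnion.2 ⟨i, mem_univ i, mem_piFinset.1 (hS he) i⟩

theorem subset_piFinset_sdiff_iff [DecidableEq ι] {A : ι → Finset α} {S : Finset (ι → α)}
    {T : Finset α} :
    S ⊆ piFinset (fun i => A i \ T) ↔ S ⊆ piFinset A ∧ Disjoint T (coordUnion S) := by
  simp only [subset_iff, mem_piFinset, mem_sdiff, disjoint_right, coordUnion, mem_biUnion,
    mem_image, mem_univ, true_and]
  aesop

theorem sum_powerset_piFinset_filter_coordUnion_eq [DecidableEq ι] (A : ι → Finset α) :
    ∑ S ∈ (piFinset A).powerset with coordUnion S = univ.biUnion A, (-1 : ℤ) ^ #S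
      = ∑ T ∈ (univ.biUnion A).powerset with ∃ i, A i ⊆ T, (-1 : ℤ) ^ #T := by
  set U := univ.biUnion A
  calc ∑ S ∈ (piFinset A).powerset with coordUnion S = U, (-1 : ℤ) ^ #S
      = ∑ S ∈ (piFinset A).powerset, ∑ T ∈ (U \ coordUnion S).powerset,
          (-1 : ℤ) ^ #S * (-1) ^ #T := by
        rw [sum_filter]
        refine sum_congr rfl fun S hS => ?_
        have hsub := coordUnion_subset_biUnion (mem_powerset.1 hS)
        simp only [← mul_sum, sum_powerset_neg_one_pow_card, sdiff_eq_empty_iff_subset, mul_boole]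
        exact if_congr ⟨fun h => h.ge, hsub.antisymm⟩ rfl rfl
    _ = ∑ T ∈ U.powerset, ∑ S ∈ (piFinset fun i => A i \ T).powerset,
          (-1 : ℤ) ^ #S * (-1) ^ #T := by
        refine sum_comm' fun S T => ?_
        simp only [mem_powerset, subset_piFinset_sdiff_iff, subset_sdiff]
        tauto
    _ = ∑ T ∈ U.powerset with ∃ i, A i ⊆ T, (-1 : ℤ) ^ #T := by
        rw [sum_filter]
        refine sum_congr rfl fun T _ => ?_
        simp only [← sum_mul, sum_powerset_neg_one_pow_card, piFinset_eq_empty,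
          sdiff_eq_empty_iff_subset, ite_mul, one_mul, zero_mul]

theorem sum_powerset_piFinset_filter_coordUnion_eq_sub [DecidableEq ι] {A : ι → Finset α}
    (hA : Pairwise (Disjoint on A)) (hne : ∀ i, (A i).Nonempty) :
    ∑ S ∈ (piFinset A).powerset with coordUnion S = univ.biUnion A, (-1 : ℤ) ^ #S
      = (if univ.biUnion A = ∅ then 1 else 0) - (-1) ^ (#(univ.biUnion A) - Fintype.card ι) := by
  rw [sum_powerset_piFinset_filter_coordUnion_eq,
    ← sum_powerset_biUnion_filter_not_exists_subset hA hne, ← sum_powerset_neg_one_pow_card,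
    ← sum_filter_add_sum_filter_not (univ.biUnion A).powerset fun T => ∃ i, A i ⊆ T,
    add_sub_cancel_right]

end Blocks

theorem stmt_1_general {α : Type*} [DecidableEq α] (n k : ℕ)
    (A : Fin n → Finset α) (hne : ∀ i, (A i).Nonempty)
    (hdisj : ∀ i j, i ≠ j → Disjoint (A i) (A j))
    (hk : (Finset.univ.biUnion A).card = k) :
    ∑ t ∈ Finset.Icc 1 (Fintype.piFinset A).card, (-1 : ℤ) ^ (t - 1) *
        ((((Fintype.piFinset A).powersetCard t).filter
          (fun S => S.biUnion (fun e => Finset.image e Finset.univ)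
            = Finset.univ.biUnion A)).card : ℤ)
      = (-1 : ℤ) ^ (k - n) := by
  change ∑ t ∈ Icc 1 #(piFinset A), (-1 : ℤ) ^ (t - 1) *
    (#{S ∈ powersetCard t (piFinset A) | coordUnion S = univ.biUnion A} : ℤ) = _
  rw [sum_Icc_neg_one_pow_mul_card_filter_powersetCard,
    sum_powerset_piFinset_filter_coordUnion_eq_sub (fun i j => hdisj i j) hne, hk,
    Fintype.card_fin]
  simp only [coordUnion, biUnion_empty, @eq_comm _ ∅ (univ.biUnion A), sub_sub_cancel]

theorem stmt_1 {α : Type*} [DecidableEq α] (n k : ℕ) (hn : 0 < n)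
    (A : Fin n → Finset α) (hne : ∀ i, (A i).Nonempty)
    (hdisj : ∀ i j, i ≠ j → Disjoint (A i) (A j))
    (hk : (Finset.univ.biUnion A).card = k) (hnk : n ≤ k) :
    ∑ t ∈ Finset.Icc 1 (Fintype.piFinset A).card, (-1 : ℤ) ^ (t - 1) *
        ((((Fintype.piFinset A).powersetCard t).filter
          (fun S => S.biUnion (fun e => Finset.image e Finset.univ)
            = Finset.univ.biUnion A)).card : ℤ)
      = (-1 : ℤ) ^ (k - n) :=
  stmt_1_general n k A hne hdisj hk
end

section
/- Let (Ω, ℱ, P) be a probability space, and for i = 1, ..., n let F_{i1}, ..., F_{i t_i} ∈ ℱ be events with F_i = ⋃_{j=1}^{t_i} F_{ij}. Let R = ⋂_{i=1}^n F_i and m = ∑_{i=1}^n t_i. For n ≤ k ≤ m, let C_k be the collection of k-element sets E = {E_1, ..., E_k} of (distinct) events drawn from the F_{ij} such that every index i ∈ {1,...,n} appears among the chosen implementations (i.e., for each i, at least one E_u equals some F_{ij}). Then P(R) = ∑_{k=n}^{m} (-1)^{k-n} ∑_{E ∈ C_k} P(⋂_{j=1}^{k} E_j), provided (to make the counting of sets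 correct) all the events F_{ij}, j ∈ {1,...,t_i}, i ∈ {1,...,n}, are pairwise distinct as sets. -/
/-!
Write `1_R = ∏ᵢ 1_{Fᵢ}` and expand each `1_{Fᵢ}` by inclusion–exclusion as the signed sum of
`1_{⋂_{j ∈ s} F_{ij}}` over nonempty `s ⊆ {1, …, tᵢ}`. Multiplying out, a choice of one nonempty
`sᵢ` for every `i` is the same thing as a set `S = ⋃ᵢ {i} × sᵢ` of events meeting every index, and
it contributes `(-1)^(|S| + n) 1_{⋂ S}`. Integrating against `μ` and grouping by `|S|` gives the
formula.
-/

open Finset MeasureTheory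

lemma neg_one_pow_sub_eq_neg_one_pow_add {R : Type*} [Monoid R] [HasDistribNeg R] {n k : ℕ}
    (h : n ≤ k) : (-1 : R) ^ (k - n) = (-1) ^ (k + n) := by
  obtain ⟨d, rfl⟩ := exists_add_of_le h
  rw [Nat.add_sub_cancel_left, show n + d + n = d + 2 * n by ring, pow_add, pow_mul, neg_one_sq,
    one_pow, mul_one]

section CoveringSets

variable {ι : Type*} {σ : ι → Type*} [Fintype ι] [DecidableEq ι] [∀ i, Fintype (σ i)]

variable (σ) in
/-- The union over `k` of the paper's families `C_k`. -/
def coveringSets : Finset (Finset (Σ i, σ i)) := {S | ∀ i, ∃ x ∈ S, x.1 = i}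

lemma mem_coveringSets {S : Finset (Σ i, σ i)} : S ∈ coveringSets σ ↔ ∀ i, ∃ x ∈ S, x.1 = i := by
  simp [coveringSets]

lemma card_le_card_of_mem_coveringSets {S : Finset (Σ i, σ i)} (hS : S ∈ coveringSets σ) :
    Fintype.card ι ≤ #S :=
  card_le_card_of_surjOn Sigma.fst fun i _ => by simpa using mem_coveringSets.1 hS i

lemma univ_sigma_mem_coveringSets {p : ∀ i, Finset (σ i)} (hp : ∀ i, (p i).Nonempty) :
    univ.sigma p ∈ coveringSets σ :=
  mem_coveringSets.2 fun i =>
    let ⟨j, hj⟩ := hp i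
    ⟨⟨i, j⟩, mem_sigma.2 ⟨mem_univ i, hj⟩, rfl⟩

lemma sum_piFinset_sigma_eq_sum_coveringSets {M : Type*} [AddCommMonoid M]
    (g : Finset (Σ i, σ i) → M) :
    ∑ p ∈ Fintype.piFinset fun i => (univ : Finset (σ i)).powerset.filter Finset.Nonempty,
      g (univ.sigma p) = ∑ S ∈ coveringSets σ, g S := by
  refine sum_nbij' (fun p => univ.sigma p)
    (fun S i => S.preimage (Sigma.mk i) sigma_mk_injective.injOn) ?_ ?_ ?_ ?_ fun _ _ => rfl
  · exact fun p hp =>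
      univ_sigma_mem_coveringSets fun i => (mem_filter.1 (Fintype.mem_piFinset.1 hp i)).2
  · intro S hS
    refine Fintype.mem_piFinset.2 fun i => mem_filter.2 ⟨mem_powerset.2 (subset_univ _), ?_⟩
    obtain ⟨⟨_, j⟩, hj, rfl⟩ := mem_coveringSets.1 hS i
    exact ⟨j, by simpa using hj⟩
  · intro p _
    ext i j
    simp
  · intro S _
    ext ⟨i, j⟩
    simp

lemma indicator_iInter_iUnion_eq_sum_coveringSets {Ω : Type*} (F : ∀ i, σ i → Set Ω) (ω : Ω) :
    (⋂ i, ⋃ j, F i j).indicator (1 : Ω → ℝ) ω =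
      ∑ S ∈ coveringSets σ, (-1) ^ (#S - Fintype.card ι) * (⋂ x ∈ S, F x.1 x.2).indicator 1 ω := by
  have inclusion_exclusion (i : ι) : (⋃ j, F i j).indicator (1 : Ω → ℝ) ω =
      ∑ s ∈ (univ : Finset (σ i)).powerset.filter Finset.Nonempty,
        (-1) ^ (#s + 1) * (⋂ j ∈ s, F i j).indicator 1 ω := by
    simpa [zsmul_eq_mul] using indicator_biUnion_eq_sum_powerset univ (F i) (1 : Ω → ℝ) ω
  calc (⋂ i, ⋃ j, F i j).indicator (1 : Ω → ℝ) ω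
      = ∏ i, (⋃ j, F i j).indicator (1 : Ω → ℝ) ω := by
        simp [prod_indicator_apply]
    _ = ∑ p ∈ Fintype.piFinset fun i => (univ : Finset (σ i)).powerset.filter Finset.Nonempty,
          ∏ i, (-1) ^ (#(p i) + 1) * (⋂ j ∈ p i, F i j).indicator 1 ω := by
        simp_rw [inclusion_exclusion, prod_univ_sum]
    _ = ∑ p ∈ Fintype.piFinset fun i => (univ : Finset (σ i)).powerset.filter Finset.Nonempty,
          (-1) ^ (#(univ.sigma p) - Fintype.card ι) *
            (⋂ x ∈ univ.sigma p, F x.1 x.2).indicator 1 ω := by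
        refine sum_congr rfl fun p hp => ?_
        have hcover := card_le_card_of_mem_coveringSets <|
          univ_sigma_mem_coveringSets fun i => (mem_filter.1 (Fintype.mem_piFinset.1 hp i)).2
        have hsign : ∏ i, (-1 : ℝ) ^ (#(p i) + 1) = (-1) ^ (#(univ.sigma p) - Fintype.card ι) := by
          rw [neg_one_pow_sub_eq_neg_one_pow_add hcover, prod_pow_eq_pow_sum, sum_add_distrib,
            card_sigma, sum_const, card_univ, smul_eq_mul, mul_one]
        rw [prod_mul_distrib, hsign, prod_indicator_apply, prod_const_one,
          Set.biInter_finsetSigma']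
    _ = _ := sum_piFinset_sigma_eq_sum_coveringSets fun S =>
        (-1) ^ (#S - Fintype.card ι) * (⋂ x ∈ S, F x.1 x.2).indicator (1 : Ω → ℝ) ω

theorem measureReal_iInter_iUnion_eq_sum_coveringSets {Ω : Type*} [MeasurableSpace Ω]
    (μ : Measure Ω) [IsFiniteMeasure μ] {F : ∀ i, σ i → Set Ω}
    (hF : ∀ i j, MeasurableSet (F i j)) :
    μ.real (⋂ i, ⋃ j, F i j) =
      ∑ S ∈ coveringSets σ, (-1) ^ (#S - Fintype.card ι) * μ.real (⋂ x ∈ S, F x.1 x.2) := by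
  have hmeas (S : Finset (Σ i, σ i)) : MeasurableSet (⋂ x ∈ S, F x.1 x.2) :=
    S.measurableSet_biInter fun x _ => hF x.1 x.2
  rw [← integral_indicator_one (MeasurableSet.iInter fun i => .iUnion fun j => hF i j),
    funext (indicator_iInter_iUnion_eq_sum_coveringSets F),
    integral_finsetSum _ fun S _ => ((integrable_const 1).indicator (hmeas S)).const_mul _]
  simp_rw [integral_const_mul, integral_indicator_one (hmeas _)]

lemma sum_coveringSets_eq_sum_Icc_sum_powersetCard {M : Type*} [AddCommMonoid M]
    (g : ℕ → Finset (Σ i, σ i) → M) :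
    ∑ S ∈ coveringSets σ, g #S S =
      ∑ k ∈ Icc (Fintype.card ι) (Fintype.card (Σ i, σ i)),
        ∑ S ∈ (univ.powersetCard k).filter (fun S : Finset (Σ i, σ i) => ∀ i, ∃ x ∈ S, x.1 = i),
          g k S := by
  have hfiber (k : ℕ) : (univ.powersetCard k).filter
      (fun S : Finset (Σ i, σ i) => ∀ i, ∃ x ∈ S, x.1 = i) = (coveringSets σ).filter (#· = k) := by
    ext S
    simp [mem_coveringSets, and_comm]
  simp_rw [hfiber]
  refine (sum_fiberwise_of_maps_to (fun S hS => mem_Icc.2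
    ⟨card_le_card_of_mem_coveringSets hS, card_le_univ S⟩) _).symm.trans ?_
  refine sum_congr rfl fun k _ => sum_congr rfl fun S hS => ?_
  rw [(mem_filter.1 hS).2]

end CoveringSets

theorem stmt_2_general {Ω : Type*} [MeasurableSpace Ω] (μ : Measure Ω) [IsProbabilityMeasure μ]
    (n : ℕ) (t : Fin n → ℕ)
    (F : (i : Fin n) → Fin (t i) → Set Ω)
    (hmeas : ∀ i j, MeasurableSet (F i j)) :
    (μ (⋂ i, ⋃ j, F i j)).toReal
      = ∑ k ∈ Finset.Icc n (∑ i, t i), (-1 : ℝ) ^ (k - n) *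
          ∑ S ∈ ((Finset.univ : Finset (Σ i : Fin n, Fin (t i))).powersetCard k).filter
              (fun S => ∀ i : Fin n, ∃ x ∈ S, x.1 = i),
            (μ (⋂ x ∈ S, F x.1 x.2)).toReal := by
  rw [← measureReal_def, measureReal_iInter_iUnion_eq_sum_coveringSets μ hmeas, Fintype.card_fin,
    sum_coveringSets_eq_sum_Icc_sum_powersetCard fun k (S : Finset (Σ i, Fin (t i))) =>
      (-1 : ℝ) ^ (k - n) * μ.real (⋂ x ∈ S, F x.1 x.2)]
  simp [Fintype.card_sigma, mul_sum, measureReal_def]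

theorem stmt_2 {Ω : Type*} [MeasurableSpace Ω] (μ : Measure Ω) [IsProbabilityMeasure μ]
    (n : ℕ) (hn : 0 < n) (t : Fin n → ℕ) (ht : ∀ i, 0 < t i)
    (F : (i : Fin n) → Fin (t i) → Set Ω)
    (hmeas : ∀ i j, MeasurableSet (F i j))
    (hdist : Function.Injective (fun p : Σ i : Fin n, Fin (t i) => F p.1 p.2)) :
    (μ (⋂ i, ⋃ j, F i j)).toReal
      = ∑ k ∈ Finset.Icc n (∑ i, t i), (-1 : ℝ) ^ (k - n) *
          ∑ S ∈ ((Finset.univ : Finset (Σ i : Fin n, Fin (t i))).powersetCard k).filter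
              (fun S => ∀ i : Fin n, ∃ x ∈ S, x.1 = i),
            (μ (⋂ x ∈ S, F x.1 x.2)).toReal :=
  stmt_2_general μ n t F hmeas
end
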